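/- (QFT Plancherel) For f, g ∈ L²(ℝ²; ℍ) (with suitable integrability so that QFT and its inversion hold), the symmetric scalar inner product satisfies ⟨f, g⟩ = (1/(2π)²)·⟨f̂, ĝ⟩, where f̂(u,v) = ∫∫ exp(-i·xu)·f(x,y)·exp(-j·yv) dx dy and ⟨f,g⟩ = ∫∫ ⟨f(x,y)·g̃(x,y)⟩₀ dx dy. -/

import Mathlib

open Quaternion MeasureTheory Real

noncomputable def qi : ℍ[ℝ] := ⟨0,1,0,0⟩
noncomputable def qj : ℍ[ℝ] := ⟨0,0,1,0⟩
noncomputable def qk : ℍ[ℝ] := ⟨0,0,0,1⟩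
/-- exp(θ·v) = cos θ + v sin θ for a quaternion unit v with v² = -1. -/
noncomputable def qexp (v : ℍ[ℝ]) (θ : ℝ) : ℍ[ℝ] := (Real.cos θ : ℍ[ℝ]) + Real.sin θ • v

/-- The two-sided quaternion Fourier transform. -/
noncomputable def QFT (f : ℝ × ℝ → ℍ[ℝ]) (u v : ℝ) : ℍ[ℝ] :=
  ∫ p : ℝ × ℝ, qexp qi (-(p.1 * u)) * f p * qexp qj (-(p.2 * v))


/-! For the real inner product `⟪a, b⟫ = Re (a * star b)` on `ℍ`, cyclicity of `Re` makes
`x ↦ p * x * q` adjoint to `x ↦ star p * x * star q`, and `star (qexp v θ) = qexp v (-θ)` for a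
pure unit `v`. Inserting the inversion formula for `f` turns `⟪f p, g p⟫` into
`(2π)⁻² ∫ w, ⟪f̂ w, qexp qi (-(x u)) * g p * qexp qj (-(y v))⟫`; the kernels have modulus one, so the
integrand is dominated by `‖g p‖ * ‖f̂ w‖`, Fubini swaps the integrals, and the inner integral is
`⟪f̂ w, ĝ w⟫`. -/

open scoped RealInnerProductSpace

namespace Quaternion

theorem re_mul_comm (a b : ℍ[ℝ]) : (a * b).re = (b * a).re := by
  simp only [re_mul]; ring

theorem inner_mul_mul_eq_inner_star_mul_mul_star (p q a b : ℍ[ℝ]) :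
    ⟪p * a * q, b⟫ = ⟪a, star p * b * star q⟫ := by
  simp only [inner_def, star_mul, star_star]
  rw [mul_assoc, mul_assoc, re_mul_comm p]
  simp only [mul_assoc]

end Quaternion

theorem star_qi : star qi = -qi := by ext <;> simp; simp [qi]
theorem star_qj : star qj = -qj := by ext <;> simp; simp [qj]
theorem qi_mul_qi : qi * qi = -1 := by ext <;> simp <;> simp [qi]
theorem qj_mul_qj : qj * qj = -1 := by ext <;> simp <;> simp [qj]

section qexp

variable {v : ℍ[ℝ]}

theorem continuous_qexp (v : ℍ[ℝ]) : Continuous (qexp v) :=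
  (Quaternion.continuous_coe.comp continuous_cos).add (continuous_sin.smul continuous_const)

theorem star_qexp (hv : star v = -v) (θ : ℝ) : star (qexp v θ) = qexp v (-θ) := by
  simp [qexp, hv]

theorem qexp_mul_qexp_neg (hvv : v * v = -1) (θ : ℝ) : qexp v θ * qexp v (-θ) = 1 := by
  have hcoe (r : ℝ) : (r : ℍ[ℝ]) = r • 1 := by rw [← Quaternion.coe_mul_eq_smul, mul_one]
  simp only [qexp, cos_neg, sin_neg, add_mul, mul_add, smul_mul_assoc, mul_smul_comm, hvv, hcoe,
    one_mul, mul_one]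
  linear_combination (norm := module) (cos_sq_add_sin_sq θ) • (1 : ℍ[ℝ])

theorem norm_qexp (hv : star v = -v) (hvv : v * v = -1) (θ : ℝ) : ‖qexp v θ‖ = 1 := by
  have : ‖qexp v θ‖ ^ 2 = 1 := by
    rw [sq, ← Quaternion.normSq_eq_norm_mul_self, Quaternion.normSq_def, star_qexp hv,
      qexp_mul_qexp_neg hvv, Quaternion.re_one]
  exact (pow_eq_one_iff_of_nonneg (norm_nonneg _) two_ne_zero).mp this

end qexp

theorem norm_qexp_qi (θ : ℝ) : ‖qexp qi θ‖ = 1 := norm_qexp star_qi qi_mul_qi θ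
theorem norm_qexp_qj (θ : ℝ) : ‖qexp qj θ‖ = 1 := norm_qexp star_qj qj_mul_qj θ

theorem MeasureTheory.Integrable.qexp_mul_mul_qexp {α : Type*} [MeasurableSpace α] {μ : Measure α}
    {h : α → ℍ[ℝ]} (hh : Integrable h μ) {a b : α → ℝ} (ha : AEStronglyMeasurable a μ)
    (hb : AEStronglyMeasurable b μ) :
    Integrable (fun x => qexp qi (a x) * h x * qexp qj (b x)) μ :=
  hh.norm.mono'
    ((((continuous_qexp qi).comp_aestronglyMeasurable ha).mul hh.1).mul
      ((continuous_qexp qj).comp_aestronglyMeasurable hb))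
    (ae_of_all _ fun x => by
      simp only [norm_mul, norm_qexp_qi, norm_qexp_qj, one_mul, mul_one, le_refl])

theorem inner_qexp_mul_mul_qexp (a b : ℍ[ℝ]) (p w : ℝ × ℝ) :
    ⟪qexp qi (w.1 * p.1) * a * qexp qj (w.2 * p.2), b⟫ =
      ⟪a, qexp qi (-(p.1 * w.1)) * b * qexp qj (-(p.2 * w.2))⟫ := by
  rw [Quaternion.inner_mul_mul_eq_inner_star_mul_mul_star, star_qexp star_qi, star_qexp star_qj,
    mul_comm w.1, mul_comm w.2]

noncomputable def qftIntegrand (g : ℝ × ℝ → ℍ[ℝ]) (p w : ℝ × ℝ) : ℍ[ℝ] :=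
  qexp qi (-(p.1 * w.1)) * g p * qexp qj (-(p.2 * w.2))

theorem QFT_eq_integral_qftIntegrand (g : ℝ × ℝ → ℍ[ℝ]) (w : ℝ × ℝ) :
    QFT g w.1 w.2 = ∫ p, qftIntegrand g p w := rfl

theorem norm_qftIntegrand (g : ℝ × ℝ → ℍ[ℝ]) (p w : ℝ × ℝ) :
    ‖qftIntegrand g p w‖ = ‖g p‖ := by
  simp only [qftIntegrand, norm_mul, norm_qexp_qi, norm_qexp_qj, one_mul, mul_one]

section qftIntegrand

variable {g : ℝ × ℝ → ℍ[ℝ]}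

theorem aestronglyMeasurable_qftIntegrand_uncurry (hg : AEStronglyMeasurable g) :
    AEStronglyMeasurable (fun z : (ℝ × ℝ) × (ℝ × ℝ) => qftIntegrand g z.1 z.2)
      (volume.prod volume) :=
  (((continuous_qexp qi).comp_aestronglyMeasurable (by fun_prop)).mul hg.comp_fst).mul
    ((continuous_qexp qj).comp_aestronglyMeasurable (by fun_prop))

theorem integrable_qftIntegrand (hg : Integrable g) (w : ℝ × ℝ) :
    Integrable (fun p => qftIntegrand g p w) :=
  hg.qexp_mul_mul_qexp (by fun_prop) (by fun_prop)

theorem integrable_inner_qftIntegrand {F : ℝ × ℝ → ℍ[ℝ]} (hg : Integrable g) (hF : Integrable F) :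
    Integrable (fun z : (ℝ × ℝ) × (ℝ × ℝ) => ⟪F z.2, qftIntegrand g z.1 z.2⟫)
      (volume.prod volume) := by
  refine (hg.norm.mul_prod hF.norm).mono'
    (hF.aestronglyMeasurable.comp_snd.inner (aestronglyMeasurable_qftIntegrand_uncurry hg.1))
    (ae_of_all _ fun z => ?_)
  calc ‖⟪F z.2, qftIntegrand g z.1 z.2⟫‖ ≤ ‖F z.2‖ * ‖qftIntegrand g z.1 z.2‖ :=
        norm_inner_le_norm _ _
    _ = ‖g z.1‖ * ‖F z.2‖ := by rw [norm_qftIntegrand, mul_comm]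

theorem inner_integral_inverse_kernel {F : ℝ × ℝ → ℍ[ℝ]} (hF : Integrable F) (p : ℝ × ℝ) :
    ⟪∫ w, qexp qi (w.1 * p.1) * F w * qexp qj (w.2 * p.2), g p⟫ =
      ∫ w, ⟪F w, qftIntegrand g p w⟫ := by
  rw [real_inner_comm, ← integral_inner (hF.qexp_mul_mul_qexp (by fun_prop) (by fun_prop))]
  exact integral_congr_ae (ae_of_all _ fun w =>
    (real_inner_comm _ _).trans (inner_qexp_mul_mul_qexp _ _ p w))

theorem integral_inner_qftIntegrand (hg : Integrable g) (a : ℍ[ℝ]) (w : ℝ × ℝ) :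
    ∫ p, ⟪a, qftIntegrand g p w⟫ = ⟪a, QFT g w.1 w.2⟫ := by
  rw [QFT_eq_integral_qftIntegrand, integral_inner (integrable_qftIntegrand hg w)]

end qftIntegrand

theorem QFT_Plancherel_general (f g : ℝ × ℝ → ℍ[ℝ])
    (hg : Integrable g)
    (hFf : Integrable (fun p : ℝ × ℝ => QFT f p.1 p.2))
    (hinv : ∀ x y : ℝ, f (x, y) =
      ((2 * π) ^ 2)⁻¹ • ∫ w : ℝ × ℝ, qexp qi (w.1 * x) * QFT f w.1 w.2 * qexp qj (w.2 * y)) :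
    (∫ p : ℝ × ℝ, (f p * star (g p)).re) =
      ((2 * π) ^ 2)⁻¹ * ∫ w : ℝ × ℝ, (QFT f w.1 w.2 * star (QFT g w.1 w.2)).re := by
  have hpointwise (p : ℝ × ℝ) : ⟪f p, g p⟫ =
      ((2 * π) ^ 2)⁻¹ * ∫ w, ⟪QFT f w.1 w.2, qftIntegrand g p w⟫ := by
    rw [← inner_integral_inverse_kernel hFf, ← real_inner_smul_left, ← hinv]
  calc (∫ p : ℝ × ℝ, ⟪f p, g p⟫)
      = ((2 * π) ^ 2)⁻¹ * ∫ p, ∫ w, ⟪QFT f w.1 w.2, qftIntegrand g p w⟫ := by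
        simp_rw [hpointwise, integral_const_mul]
    _ = ((2 * π) ^ 2)⁻¹ * ∫ w, ∫ p, ⟪QFT f w.1 w.2, qftIntegrand g p w⟫ := by
        rw [integral_integral_swap (integrable_inner_qftIntegrand hg hFf)]
    _ = ((2 * π) ^ 2)⁻¹ * ∫ w : ℝ × ℝ, ⟪QFT f w.1 w.2, QFT g w.1 w.2⟫ := by
        simp_rw [integral_inner_qftIntegrand hg]

theorem QFT_Plancherel (f g : ℝ × ℝ → ℍ[ℝ])
    (hf : Integrable f) (hg : Integrable g)
    (hFf : Integrable (fun p : ℝ × ℝ => QFT f p.1 p.2))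
    (hFg : Integrable (fun p : ℝ × ℝ => QFT g p.1 p.2))
    (hinv : ∀ x y : ℝ, f (x, y) =
      ((2 * π) ^ 2)⁻¹ • ∫ w : ℝ × ℝ, qexp qi (w.1 * x) * QFT f w.1 w.2 * qexp qj (w.2 * y)) :
    (∫ p : ℝ × ℝ, (f p * star (g p)).re) =
      ((2 * π) ^ 2)⁻¹ * ∫ w : ℝ × ℝ, (QFT f w.1 w.2 * star (QFT g w.1 w.2)).re :=
  QFT_Plancherel_general f g hg hFf hinv
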